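/- arXiv:1511.05469 — 2 statements merged into one kernel-verified Lean document; each statement's English description precedes it below -/
import Mathlib

section
/- For α₀ ∈ (0, 1/2) and β₀ ∈ (1.5, 1.5 + α₀), the derivative of f(x) = x^{β₀} sin(x^{-α₀}) (with f(0)=0) is Hölder continuous on [0,1] with some Hölder exponent δ ∈ (0, 1). -/
/-!
For `x > 0` the derivative is `g x = b x^(b-1) sin(x^(-a)) - a x^(b-1-a) cos(x^(-a))`, and
`f'(0) = 0`. On `(0, 1]` we have `|g x| ≤ A x^γ` and `|g' x| ≤ B x^(γ-κ)`, where `γ = b - 1 - a > 0`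
and `κ = 1 + a`. Such bounds force Hölder continuity with exponent `γ / κ`: for `y ≤ x` and
`h = x - y`, if `y ≤ h^(1/κ)` then both `|g x|` and `|g y|` are `O(h^(γ/κ))`, and otherwise the mean
value theorem on `[y, x]` gives `|g x - g y| ≤ B y^(γ-κ) h ≤ B h^(γ/κ)`.
-/

open Real Set Filter Topology

section HolderOfRpowBounds

variable {F F' : ℝ → ℝ} {γ κ A B x y : ℝ}

lemma abs_sub_le_of_le_rpow_inv (hγ : 0 ≤ γ) (hκ : 1 ≤ κ)
    (hF : ∀ t ∈ Icc (0:ℝ) 1, |F t| ≤ A * t ^ γ) (hy : 0 ≤ y) (hyx : y ≤ x) (hx : x ≤ 1)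
    (hfar : y ≤ (x - y) ^ κ⁻¹) :
    |F x - F y| ≤ (2 ^ γ + 1) * A * (x - y) ^ (γ / κ) := by
  have hA : 0 ≤ A := by simpa using (abs_nonneg _).trans (hF 1 ⟨zero_le_one, le_rfl⟩)
  have hh : 0 ≤ x - y := sub_nonneg.2 hyx
  have hroot : ((x - y) ^ κ⁻¹) ^ γ = (x - y) ^ (γ / κ) := by
    rw [← rpow_mul hh, inv_mul_eq_div]
  have hle_root : x - y ≤ (x - y) ^ κ⁻¹ := by
    simpa using rpow_le_rpow_of_exponent_ge' hh (by linarith) (by positivity)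
      (inv_le_one_of_one_le₀ hκ)
  have hxγ : x ^ γ ≤ 2 ^ γ * (x - y) ^ (γ / κ) := by
    calc x ^ γ ≤ (2 * (x - y) ^ κ⁻¹) ^ γ := rpow_le_rpow (by linarith) (by linarith) hγ
      _ = 2 ^ γ * (x - y) ^ (γ / κ) := by rw [mul_rpow zero_le_two (by positivity), hroot]
  have hyγ : y ^ γ ≤ (x - y) ^ (γ / κ) := hroot ▸ rpow_le_rpow hy hfar hγ
  calc |F x - F y| ≤ |F x| + |F y| := abs_sub _ _
    _ ≤ A * x ^ γ + A * y ^ γ :=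
        add_le_add (hF x ⟨hy.trans hyx, hx⟩) (hF y ⟨hy, hyx.trans hx⟩)
    _ ≤ A * (2 ^ γ * (x - y) ^ (γ / κ)) + A * (x - y) ^ (γ / κ) := by gcongr
    _ = (2 ^ γ + 1) * A * (x - y) ^ (γ / κ) := by ring

lemma abs_sub_le_of_rpow_inv_le (hκ : 0 < κ) (hγκ : γ ≤ κ)
    (hF' : ∀ t ∈ Ioc (0:ℝ) 1, HasDerivAt F (F' t) t)
    (hB : ∀ t ∈ Ioc (0:ℝ) 1, |F' t| ≤ B * t ^ (γ - κ)) (hyx : y < x) (hx : x ≤ 1)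
    (hnear : (x - y) ^ κ⁻¹ ≤ y) :
    |F x - F y| ≤ B * (x - y) ^ (γ / κ) := by
  have hh : 0 < x - y := sub_pos.2 hyx
  have hy : 0 < y := (rpow_pos_of_pos hh _).trans_le hnear
  have hB0 : 0 ≤ B := nonneg_of_mul_nonneg_left
    ((abs_nonneg _).trans (hB y ⟨hy, by linarith⟩)) (rpow_pos_of_pos hy _)
  have hmvt : |F x - F y| ≤ B * y ^ (γ - κ) * (x - y) := by
    refine norm_image_sub_le_of_norm_deriv_le_segment'
      (fun t ht ↦ (hF' t ⟨hy.trans_le ht.1, ht.2.trans hx⟩).hasDerivWithinAt)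
      (fun t ht ↦ ?_) x ⟨hyx.le, le_rfl⟩
    calc ‖F' t‖ ≤ B * t ^ (γ - κ) := hB t ⟨hy.trans_le ht.1, ht.2.le.trans hx⟩
      _ ≤ B * y ^ (γ - κ) :=
          mul_le_mul_of_nonneg_left (rpow_le_rpow_of_nonpos hy ht.1 (by linarith)) hB0
  have hy_pow : y ^ (γ - κ) ≤ (x - y) ^ (γ / κ - 1) := by
    calc y ^ (γ - κ) ≤ ((x - y) ^ κ⁻¹) ^ (γ - κ) :=
          rpow_le_rpow_of_nonpos (rpow_pos_of_pos hh _) hnear (by linarith)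
      _ = (x - y) ^ (γ / κ - 1) := by
          rw [← rpow_mul hh.le]; congr 1; field_simp
  calc |F x - F y| ≤ B * y ^ (γ - κ) * (x - y) := hmvt
    _ ≤ B * (x - y) ^ (γ / κ - 1) * (x - y) := by gcongr
    _ = B * (x - y) ^ (γ / κ) := by
        rw [rpow_sub_one hh.ne', mul_assoc, div_mul_cancel₀ _ hh.ne']

theorem abs_sub_le_of_rpow_bounds (hγ : 0 < γ) (hγκ : γ ≤ κ) (hκ : 1 ≤ κ)
    (hF : ∀ t ∈ Icc (0:ℝ) 1, |F t| ≤ A * t ^ γ)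
    (hF' : ∀ t ∈ Ioc (0:ℝ) 1, HasDerivAt F (F' t) t)
    (hB : ∀ t ∈ Ioc (0:ℝ) 1, |F' t| ≤ B * t ^ (γ - κ))
    (hx : x ∈ Icc (0:ℝ) 1) (hy : y ∈ Icc (0:ℝ) 1) :
    |F x - F y| ≤ ((2 ^ γ + 1) * A + B) * |x - y| ^ (γ / κ) := by
  wlog hyx : y ≤ x generalizing x y
  · rw [abs_sub_comm, abs_sub_comm x]
    exact this hy hx (le_of_not_ge hyx)
  have hA : 0 ≤ A := by simpa using (abs_nonneg _).trans (hF 1 ⟨zero_le_one, le_rfl⟩)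
  have hB0 : 0 ≤ B := by simpa using (abs_nonneg _).trans (hB 1 ⟨zero_lt_one, le_rfl⟩)
  rcases hyx.eq_or_lt with rfl | hlt
  · simp [zero_rpow (div_pos hγ (hγ.trans_le hγκ)).ne']
  rw [abs_of_pos (sub_pos.2 hlt)]
  rcases le_total y ((x - y) ^ κ⁻¹) with hfar | hnear
  · calc |F x - F y| ≤ (2 ^ γ + 1) * A * (x - y) ^ (γ / κ) :=
          abs_sub_le_of_le_rpow_inv hγ.le hκ hF hy.1 hyx hx.2 hfar
      _ ≤ ((2 ^ γ + 1) * A + B) * (x - y) ^ (γ / κ) := by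
          gcongr; exact le_add_of_nonneg_right hB0
  · calc |F x - F y| ≤ B * (x - y) ^ (γ / κ) :=
          abs_sub_le_of_rpow_inv_le (by linarith) hγκ hF' hB hlt hx.2 hnear
      _ ≤ ((2 ^ γ + 1) * A + B) * (x - y) ^ (γ / κ) := by
          gcongr; exact le_add_of_nonneg_left (by positivity)

end HolderOfRpowBounds

lemma hasDerivAt_zero_of_abs_le_rpow {f : ℝ → ℝ} {p : ℝ} (hp : 1 < p)
    (hf : ∀ t, |f t| ≤ |t| ^ p) : HasDerivAt f 0 0 := by
  have hf0 : f 0 = 0 := by simpa [zero_rpow (by linarith : p ≠ 0)] using hf 0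
  have hlim : Tendsto (fun t : ℝ ↦ |t| ^ (p - 1)) (𝓝[≠] 0) (𝓝 0) := by
    have := (continuous_abs.rpow_const fun _ ↦ Or.inr (sub_pos.2 hp).le).tendsto 0
    simpa [zero_rpow (sub_pos.2 hp).ne'] using this.mono_left nhdsWithin_le_nhds
  rw [hasDerivAt_iff_tendsto_slope]
  refine squeeze_zero_norm' ?_ hlim
  filter_upwards [self_mem_nhdsWithin] with t ht
  have ht' : 0 < |t| := abs_pos.2 ht
  calc ‖slope f 0 t‖ = |f t| / |t| := by
        rw [slope_def_field, hf0, sub_zero, sub_zero, norm_div, norm_eq_abs, norm_eq_abs]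
    _ ≤ |t| ^ p / |t| := by gcongr; exact hf t
    _ = |t| ^ (p - 1) := (rpow_sub_one ht'.ne' p).symm

noncomputable def oscDeriv (a b x : ℝ) : ℝ :=
  b * x ^ (b - 1) * sin (x ^ (-a)) - a * x ^ (b - 1 - a) * cos (x ^ (-a))

noncomputable def oscDeriv2 (a b x : ℝ) : ℝ :=
  b * (b - 1) * x ^ (b - 2) * sin (x ^ (-a))
    - a * (2 * b - 1 - a) * x ^ (b - 2 - a) * cos (x ^ (-a))
    - a ^ 2 * x ^ (b - 2 - 2 * a) * sin (x ^ (-a))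

section
variable {a b x : ℝ}

lemma rpow_mul_rpow_of_add_eq (hx : 0 < x) {p q r : ℝ} (h : p + q = r) :
    x ^ p * x ^ q = x ^ r := by
  rw [← rpow_add hx, h]

lemma hasDerivAt_rpow_mul_sin_rpow_neg (hx : 0 < x) :
    HasDerivAt (fun t ↦ t ^ b * sin (t ^ (-a))) (oscDeriv a b x) x := by
  refine ((hasDerivAt_rpow_const (p := b) (Or.inl hx.ne')).mul
    (hasDerivAt_rpow_const (p := -a) (Or.inl hx.ne')).sin).congr_deriv ?_
  rw [oscDeriv, ← rpow_mul_rpow_of_add_eq hx (show b + (-a - 1) = b - 1 - a by ring)]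
  ring

lemma hasDerivAt_oscDeriv (hx : 0 < x) :
    HasDerivAt (oscDeriv a b) (oscDeriv2 a b x) x := by
  have hu := hasDerivAt_rpow_const (p := -a) (Or.inl hx.ne')
  refine ((((hasDerivAt_rpow_const (p := b - 1) (Or.inl hx.ne')).const_mul b).mul hu.sin).sub
    (((hasDerivAt_rpow_const (p := b - 1 - a) (Or.inl hx.ne')).const_mul a).mul hu.cos))
    |>.congr_deriv ?_
  rw [oscDeriv2, show b - 1 - 1 = b - 2 by ring, show b - 1 - a - 1 = b - 2 - a by ring,
    ← rpow_mul_rpow_of_add_eq hx (show b - 1 + (-a - 1) = b - 2 - a by ring),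
    ← rpow_mul_rpow_of_add_eq hx (show b - 1 - a + (-a - 1) = b - 2 - 2 * a by ring)]
  ring

lemma abs_mul_le_of_abs_le_one {c t : ℝ} (hc : 0 ≤ c) (ht : |t| ≤ 1) : |c * t| ≤ c := by
  rw [abs_mul, abs_of_nonneg hc]
  exact mul_le_of_le_one_right hc ht

lemma abs_oscDeriv_le (ha : 0 ≤ a) (hb : 1 + a ≤ b) (hx : 0 < x) (hx1 : x ≤ 1) :
    |oscDeriv a b x| ≤ (a + b) * x ^ (b - 1 - a) := by
  have hpow : x ^ (b - 1) ≤ x ^ (b - 1 - a) := rpow_le_rpow_of_exponent_ge hx hx1 (by linarith)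
  have hb0 : 0 ≤ b * x ^ (b - 1) := mul_nonneg (by linarith) (rpow_nonneg hx.le _)
  calc |oscDeriv a b x| ≤ b * x ^ (b - 1) + a * x ^ (b - 1 - a) :=
        (abs_sub _ _).trans (add_le_add (abs_mul_le_of_abs_le_one hb0 (abs_sin_le_one _))
          (abs_mul_le_of_abs_le_one (by positivity) (abs_cos_le_one _)))
    _ ≤ b * x ^ (b - 1 - a) + a * x ^ (b - 1 - a) := by gcongr; linarith
    _ = (a + b) * x ^ (b - 1 - a) := by ring

lemma abs_oscDeriv2_le (ha : 0 ≤ a) (hb : 1 + a ≤ b) (hx : 0 < x) (hx1 : x ≤ 1) :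
    |oscDeriv2 a b x| ≤ (b * (b - 1) + a * (2 * b - 1)) * x ^ (b - 2 - 2 * a) := by
  have hc₁ : 0 ≤ b * (b - 1) := mul_nonneg (by linarith) (by linarith)
  have hc₂ : 0 ≤ a * (2 * b - 1 - a) := mul_nonneg ha (by linarith)
  have hpow₁ : x ^ (b - 2) ≤ x ^ (b - 2 - 2 * a) :=
    rpow_le_rpow_of_exponent_ge hx hx1 (by linarith)
  have hpow₂ : x ^ (b - 2 - a) ≤ x ^ (b - 2 - 2 * a) :=
    rpow_le_rpow_of_exponent_ge hx hx1 (by linarith)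
  calc |oscDeriv2 a b x|
      ≤ b * (b - 1) * x ^ (b - 2) + a * (2 * b - 1 - a) * x ^ (b - 2 - a)
        + a ^ 2 * x ^ (b - 2 - 2 * a) :=
        (abs_sub _ _).trans <| add_le_add ((abs_sub _ _).trans <| add_le_add
          (abs_mul_le_of_abs_le_one (by positivity) (abs_sin_le_one _))
          (abs_mul_le_of_abs_le_one (by positivity) (abs_cos_le_one _)))
          (abs_mul_le_of_abs_le_one (by positivity) (abs_sin_le_one _))
    _ ≤ b * (b - 1) * x ^ (b - 2 - 2 * a) + a * (2 * b - 1 - a) * x ^ (b - 2 - 2 * a)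
        + a ^ 2 * x ^ (b - 2 - 2 * a) := by gcongr
    _ = (b * (b - 1) + a * (2 * b - 1)) * x ^ (b - 2 - 2 * a) := by ring

end

section
variable {a b x : ℝ} {f : ℝ → ℝ}

lemma deriv_eq_oscDeriv (hf : ∀ x, f x = if 0 < x then x ^ b * sin (x ^ (-a)) else 0)
    (hx : 0 < x) : deriv f x = oscDeriv a b x := by
  have hev : f =ᶠ[𝓝 x] fun t ↦ t ^ b * sin (t ^ (-a)) := by
    filter_upwards [Ioi_mem_nhds hx] with t ht
    exact (hf t).trans (if_pos ht)
  exact ((hasDerivAt_rpow_mul_sin_rpow_neg hx).congr_of_eventuallyEq hev).deriv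

lemma hasDerivAt_deriv_oscDeriv2
    (hf : ∀ x, f x = if 0 < x then x ^ b * sin (x ^ (-a)) else 0) (hx : 0 < x) :
    HasDerivAt (deriv f) (oscDeriv2 a b x) x := by
  refine (hasDerivAt_oscDeriv hx).congr_of_eventuallyEq ?_
  filter_upwards [Ioi_mem_nhds hx] with t ht using deriv_eq_oscDeriv hf ht

lemma deriv_zero_eq_zero (hf : ∀ x, f x = if 0 < x then x ^ b * sin (x ^ (-a)) else 0)
    (hb : 1 < b) : deriv f 0 = 0 := by
  refine (hasDerivAt_zero_of_abs_le_rpow hb fun t ↦ ?_).deriv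
  rw [hf t]
  split_ifs with ht
  · rw [abs_of_pos ht]
    exact abs_mul_le_of_abs_le_one (rpow_nonneg ht.le _) (abs_sin_le_one _)
  · simp only [abs_zero]; positivity

lemma abs_deriv_le (hf : ∀ x, f x = if 0 < x then x ^ b * sin (x ^ (-a)) else 0)
    (ha : 0 ≤ a) (hb : 1 + a < b) (hx : x ∈ Icc (0:ℝ) 1) :
    |deriv f x| ≤ (a + b) * x ^ (b - 1 - a) := by
  rcases hx.1.eq_or_lt with rfl | hx₀
  · rw [deriv_zero_eq_zero hf (by linarith), abs_zero]
    exact mul_nonneg (by linarith) (rpow_nonneg le_rfl _)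
  · rw [deriv_eq_oscDeriv hf hx₀]
    exact abs_oscDeriv_le ha hb.le hx₀ hx.2

end

/-- for α₀ ∈ (0,1/2), β₀ ∈ (1.5, 1.5+α₀), the derivative of
f(x) = x^{β₀} sin(x^{-α₀}) (f = 0 for x ≤ 0) is Hölder continuous on [0,1]
with some exponent δ ∈ (0,1). -/
theorem stmt1 (α₀ β₀ : ℝ) (hα : α₀ ∈ Set.Ioo (0:ℝ) (1/2))
    (hβ : β₀ ∈ Set.Ioo (1.5:ℝ) (1.5 + α₀))
    (f : ℝ → ℝ)
    (hf : ∀ x : ℝ, f x = if 0 < x then x ^ β₀ * Real.sin (x ^ (-α₀)) else 0) :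
    ∃ δ ∈ Set.Ioo (0:ℝ) 1, ∃ C > 0,
      ∀ x ∈ Set.Icc (0:ℝ) 1, ∀ y ∈ Set.Icc (0:ℝ) 1,
        |deriv f x - deriv f y| ≤ C * |x - y| ^ δ := by
  obtain ⟨hα₀, hα₁⟩ := hα
  obtain ⟨hβ₀, hβ₁⟩ := hβ
  norm_num at hβ₀ hβ₁
  have hγ : 0 < β₀ - 1 - α₀ := by linarith
  have hκ : 0 < 1 + α₀ := by linarith
  have hB (t : ℝ) (ht : t ∈ Ioc (0:ℝ) 1) : |oscDeriv2 α₀ β₀ t|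
      ≤ (β₀ * (β₀ - 1) + α₀ * (2 * β₀ - 1)) * t ^ (β₀ - 1 - α₀ - (1 + α₀)) := by
    convert abs_oscDeriv2_le hα₀.le (by linarith) ht.1 ht.2 using 3; ring
  refine ⟨(β₀ - 1 - α₀) / (1 + α₀), ⟨by positivity, (div_lt_one hκ).2 (by linarith)⟩,
    (2 ^ (β₀ - 1 - α₀) + 1) * (α₀ + β₀) + (β₀ * (β₀ - 1) + α₀ * (2 * β₀ - 1)), ?_,
    fun x hx y hy ↦ abs_sub_le_of_rpow_bounds hγ (by linarith) (by linarith)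
      (fun t ↦ abs_deriv_le hf hα₀.le (by linarith))
      (fun t ht ↦ hasDerivAt_deriv_oscDeriv2 hf ht.1) hB hx hy⟩
  have : 0 < β₀ * (β₀ - 1) + α₀ * (2 * β₀ - 1) := by nlinarith
  positivity
end

section
/- If f ∈ C^l_{pol,0} with l > D, then f ∈ L¹(ℝ^D) ∩ L²(ℝ^D), and its convolution with the heat kernel G_ν(t,·) satisfies |f ∗ G_ν(t,·)(x)| ≤ c'/(1 + |x|^{l-μ}) for |x| ≥ 1, for any μ ∈ (0,1) and some constant c' depending on μ, f, uniformly in t ∈ (0, 1] and ν ∈ (0,1]. -/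
/-!
Peetre's inequality `1 + ‖x‖ ≤ (1 + ‖x - y‖) (1 + ‖y‖)` turns the decay `|f z| ≲ (1 + ‖z‖)^(-l)`
into `|f (x - y)| ≲ (1 + ‖x‖)^(-l) (1 + ‖y‖)^l`, and `(1 + ‖y‖)^l ≤ e^(2 l²) e^(‖y‖² / 8)`.
For `ν t ≤ 1` the heat kernel still integrates `e^(‖y‖² / 8)` to at most `2^(D / 2)`, since the
Gaussian exponent `1 / (4 ν t) - 1 / 8` remains at least half of `1 / (4 ν t)`. Hence the
convolution keeps the full decay order `l`, uniformly in `ν, t ≤ 1`. Membership in `L¹` and `L²`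
comes from `l > D` and the boundedness of `f`.
-/

open Real MeasureTheory Module

section Weights

variable {E : Type*} [NormedAddCommGroup E]

lemma one_add_rpow_le_two_rpow_mul {r l : ℝ} (hr : 0 ≤ r) (hl : 0 ≤ l) :
    (1 + r) ^ l ≤ 2 ^ l * (1 + r ^ l) := by
  rcases le_total r 1 with hr1 | hr1
  · calc (1 + r) ^ l ≤ 2 ^ l := rpow_le_rpow (by positivity) (by linarith) hl
      _ ≤ 2 ^ l * (1 + r ^ l) := le_mul_of_one_le_right (by positivity)
          (le_add_of_nonneg_right (rpow_nonneg hr l))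
  · calc (1 + r) ^ l ≤ (2 * r) ^ l := rpow_le_rpow (by positivity) (by linarith) hl
      _ = 2 ^ l * r ^ l := mul_rpow zero_le_two hr
      _ ≤ 2 ^ l * (1 + r ^ l) := by gcongr; linarith

lemma one_add_rpow_le_exp {r l : ℝ} (hr : 0 ≤ r) (hl : 0 ≤ l) :
    (1 + r) ^ l ≤ exp (2 * l ^ 2) * exp (r ^ 2 / 8) := by
  calc (1 + r) ^ l ≤ exp r ^ l := by
        gcongr
        linarith [add_one_le_exp r]
    _ = exp (r * l) := (exp_mul r l).symm
    _ ≤ exp (2 * l ^ 2 + r ^ 2 / 8) := exp_le_exp.2 (by nlinarith [sq_nonneg (r - 4 * l)])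
    _ = exp (2 * l ^ 2) * exp (r ^ 2 / 8) := exp_add _ _

lemma one_add_rpow_neg_le_two_div {r l m : ℝ} (hr : 1 ≤ r) (hl : 0 ≤ l) (hml : m ≤ l) :
    (1 + r) ^ (-l) ≤ 2 / (1 + r ^ m) := by
  have hrl : r ^ m ≤ (1 + r) ^ l :=
    (rpow_le_rpow_of_exponent_le hr hml).trans (rpow_le_rpow (by linarith) (by linarith) hl)
  have hone : 1 ≤ (1 + r) ^ l := one_le_rpow (by linarith) hl
  rw [rpow_neg (by linarith), inv_eq_one_div,
    div_le_div_iff₀ (by positivity) (by linarith [rpow_nonneg (by linarith : (0:ℝ) ≤ r) m])]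
  linarith

lemma one_add_norm_le_mul_one_add_norm (x y : E) :
    1 + ‖x‖ ≤ (1 + ‖x - y‖) * (1 + ‖y‖) := by
  have := norm_le_norm_sub_add x y
  nlinarith [norm_nonneg (x - y), norm_nonneg y, mul_nonneg (norm_nonneg (x - y)) (norm_nonneg y)]

lemma one_add_norm_sub_rpow_neg_le (x y : E) {l : ℝ} (hl : 0 ≤ l) :
    (1 + ‖x - y‖) ^ (-l) ≤ (1 + ‖y‖) ^ l * (1 + ‖x‖) ^ (-l) := by
  have h := rpow_le_rpow (by positivity) (one_add_norm_le_mul_one_add_norm x y) hl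
  rw [mul_rpow (by positivity) (by positivity)] at h
  rw [rpow_neg (by positivity), rpow_neg (by positivity), ← div_eq_mul_inv,
    inv_le_iff_one_le_mul₀ (by positivity), div_mul_eq_mul_div, one_le_div (by positivity)]
  linarith

lemma exists_abs_le_mul_one_add_norm_rpow_neg [ProperSpace E] {f : E → ℝ} (hf : Continuous f)
    {l : ℝ} (hl : 0 ≤ l)
    (hdecay : ∃ c : ℝ, ∀ x, 1 ≤ ‖x‖ → |f x| ≤ c / (1 + ‖x‖ ^ l)) :
    ∃ C > 0, ∀ z, |f z| ≤ C * (1 + ‖z‖) ^ (-l) := by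
  obtain ⟨c, hc⟩ := hdecay
  obtain ⟨M, hM⟩ :=
    (isCompact_closedBall (0 : E) 1).exists_bound_of_continuousOn hf.continuousOn
  set K := max (max M c) 1
  refine ⟨2 ^ l * K, by positivity, fun z => ?_⟩
  have hz : (0 : ℝ) < (1 + ‖z‖) ^ l := by positivity
  rw [rpow_neg (by positivity), ← div_eq_mul_inv, le_div_iff₀ hz]
  rcases le_total ‖z‖ 1 with hz1 | hz1
  · have hfz : |f z| ≤ K :=
      (hM z (by simpa using hz1)).trans ((le_max_left _ _).trans (le_max_left _ _))
    calc |f z| * (1 + ‖z‖) ^ l ≤ K * 2 ^ l :=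
          mul_le_mul hfz (rpow_le_rpow (by positivity) (by linarith) hl) hz.le (by positivity)
      _ = 2 ^ l * K := mul_comm _ _
  · have hw : (0 : ℝ) < 1 + ‖z‖ ^ l := by positivity
    have hfz : |f z| * (1 + ‖z‖ ^ l) ≤ K :=
      ((le_div_iff₀ hw).1 (hc z hz1)).trans ((le_max_right _ _).trans (le_max_left _ _))
    calc |f z| * (1 + ‖z‖) ^ l ≤ |f z| * (2 ^ l * (1 + ‖z‖ ^ l)) :=
          mul_le_mul_of_nonneg_left (one_add_rpow_le_two_rpow_mul (norm_nonneg z) hl) (abs_nonneg _)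
      _ = 2 ^ l * (|f z| * (1 + ‖z‖ ^ l)) := by ring
      _ ≤ 2 ^ l * K := by gcongr

end Weights

lemma memLp_two_of_integrable_of_abs_le {α : Type*} [MeasurableSpace α] {μ : Measure α}
    {f : α → ℝ} {C : ℝ} (hf : Integrable f μ) (hC : ∀ x, |f x| ≤ C) : MemLp f 2 μ := by
  rw [memLp_two_iff_integrable_sq hf.aestronglyMeasurable]
  refine (hf.abs.const_mul C).mono' (hf.aestronglyMeasurable.pow 2) (ae_of_all _ fun x => ?_)
  rw [Real.norm_eq_abs, abs_pow, sq]
  exact mul_le_mul_of_nonneg_right (hC x) (abs_nonneg _)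

noncomputable def heatKernel (V : Type*) [NormedAddCommGroup V] [NormedSpace ℝ V]
    (ν t : ℝ) (y : V) : ℝ :=
  (4 * π * ν * t) ^ (-(finrank ℝ V : ℝ) / 2) * exp (-‖y‖ ^ 2 / (4 * ν * t))

namespace heatKernel

section NormedSpace

variable {V : Type*} [NormedAddCommGroup V] [NormedSpace ℝ V] {ν t : ℝ}

lemma nonneg (h : 0 ≤ ν * t) (y : V) : 0 ≤ heatKernel V ν t y := by
  have : 0 ≤ 4 * π * ν * t := by rw [mul_assoc]; positivity
  unfold heatKernel
  positivity

lemma exp_mul_eq (y : V) :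
    exp (‖y‖ ^ 2 / 8) * heatKernel V ν t y =
      (4 * π * ν * t) ^ (-(finrank ℝ V : ℝ) / 2) *
        exp (-(1 / (4 * ν * t) - 1 / 8) * ‖y‖ ^ 2) := by
  rw [heatKernel, mul_left_comm, ← exp_add]
  ring_nf

end NormedSpace

variable {V : Type*} [NormedAddCommGroup V] [InnerProductSpace ℝ V] [FiniteDimensional ℝ V]
  [MeasurableSpace V] [BorelSpace V] {ν t : ℝ}

lemma integral_exp_mul (h0 : 0 < ν * t) (h2 : ν * t < 2) :
    ∫ y : V, exp (‖y‖ ^ 2 / 8) * heatKernel V ν t y =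
      (1 - ν * t / 2)⁻¹ ^ ((finrank ℝ V : ℝ) / 2) := by
  have hν : ν ≠ 0 := left_ne_zero_of_mul h0.ne'
  have ht : t ≠ 0 := right_ne_zero_of_mul h0.ne'
  have hs : 0 < 4 * π * ν * t := by rw [mul_assoc]; positivity
  have hb_eq : 1 / (4 * ν * t) - 1 / 8 = (1 - ν * t / 2) / (4 * ν * t) := by field_simp; ring
  have hb : 0 < 1 / (4 * ν * t) - 1 / 8 := by
    rw [hb_eq]; exact div_pos (by linarith) (by rw [mul_assoc]; positivity)
  simp_rw [exp_mul_eq]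
  rw [integral_const_mul, GaussianFourier.integral_rexp_neg_mul_sq_norm hb, neg_div,
    rpow_neg hs.le, ← inv_rpow hs.le, ← mul_rpow (inv_nonneg.2 hs.le) (div_pos pi_pos hb).le]
  congr 1
  rw [hb_eq]
  field_simp

lemma integrable_exp_mul (h0 : 0 < ν * t) (h2 : ν * t < 2) :
    Integrable fun y : V => exp (‖y‖ ^ 2 / 8) * heatKernel V ν t y := by
  refine Integrable.of_integral_ne_zero ?_
  rw [integral_exp_mul h0 h2]
  exact (rpow_pos_of_pos (inv_pos.2 (by linarith)) _).ne'

lemma abs_integral_mul_le {g : V → ℝ} {A : ℝ} (h0 : 0 < ν * t) (h1 : ν * t ≤ 1)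
    (hg : ∀ y, |g y| ≤ A * exp (‖y‖ ^ 2 / 8)) :
    |∫ y, g y * heatKernel V ν t y| ≤ A * 2 ^ ((finrank ℝ V : ℝ) / 2) := by
  have hA : 0 ≤ A := by simpa using (abs_nonneg (g 0)).trans (hg 0)
  rw [← Real.norm_eq_abs]
  calc ‖∫ y, g y * heatKernel V ν t y‖
      ≤ ∫ y, A * (exp (‖y‖ ^ 2 / 8) * heatKernel V ν t y) := by
        refine norm_integral_le_of_norm_le
          ((integrable_exp_mul (V := V) h0 (by linarith)).const_mul A) (ae_of_all _ fun y => ?_)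
        rw [norm_mul, Real.norm_of_nonneg (nonneg h0.le y), ← mul_assoc]
        exact mul_le_mul_of_nonneg_right (hg y) (nonneg h0.le y)
    _ = A * (1 - ν * t / 2)⁻¹ ^ ((finrank ℝ V : ℝ) / 2) := by
        rw [integral_const_mul, integral_exp_mul h0 (by linarith)]
    _ ≤ A * 2 ^ ((finrank ℝ V : ℝ) / 2) := by
        have hpos : 0 < 1 - ν * t / 2 := by linarith
        have : (1 - ν * t / 2)⁻¹ ≤ 2 := by
          rw [inv_le_comm₀ hpos two_pos]
          linarith
        gcongr

end heatKernel

lemma abs_integral_comp_sub_mul_heatKernel_le {V : Type*} [NormedAddCommGroup V]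
    [InnerProductSpace ℝ V] [FiniteDimensional ℝ V] [MeasurableSpace V] [BorelSpace V]
    {f : V → ℝ} {C l ν t : ℝ} (hC : 0 ≤ C) (hl : 0 ≤ l)
    (hf : ∀ z, |f z| ≤ C * (1 + ‖z‖) ^ (-l))
    (h0 : 0 < ν * t) (h1 : ν * t ≤ 1) (x : V) :
    |∫ y, f (x - y) * heatKernel V ν t y| ≤
      C * exp (2 * l ^ 2) * 2 ^ ((finrank ℝ V : ℝ) / 2) * (1 + ‖x‖) ^ (-l) := by
  have hg (y : V) :
      |f (x - y)| ≤ C * exp (2 * l ^ 2) * (1 + ‖x‖) ^ (-l) * exp (‖y‖ ^ 2 / 8) :=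
    calc |f (x - y)| ≤ C * (1 + ‖x - y‖) ^ (-l) := hf _
      _ ≤ C * ((1 + ‖y‖) ^ l * (1 + ‖x‖) ^ (-l)) := by
          gcongr; exact one_add_norm_sub_rpow_neg_le x y hl
      _ ≤ C * (exp (2 * l ^ 2) * exp (‖y‖ ^ 2 / 8) * (1 + ‖x‖) ^ (-l)) := by
          gcongr; exact one_add_rpow_le_exp (norm_nonneg y) hl
      _ = C * exp (2 * l ^ 2) * (1 + ‖x‖) ^ (-l) * exp (‖y‖ ^ 2 / 8) := by ring
  calc _ ≤ _ := heatKernel.abs_integral_mul_le h0 h1 hg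
    _ = _ := by ring

theorem stmt16_general (D : ℕ) (l : ℝ) (hl : (D : ℝ) < l)
    (f : EuclideanSpace ℝ (Fin D) → ℝ) (hfc : Continuous f)
    (hdecay : ∃ c : ℝ, ∀ x, 1 ≤ ‖x‖ → |f x| ≤ c / (1 + ‖x‖ ^ l)) :
    Integrable f ∧ MemLp f 2 (volume) ∧
    ∀ μ ∈ Set.Ioo (0:ℝ) 1, ∃ c' > 0,
      ∀ ν ∈ Set.Ioc (0:ℝ) 1, ∀ t ∈ Set.Ioc (0:ℝ) 1,
        ∀ x : EuclideanSpace ℝ (Fin D), 1 ≤ ‖x‖ →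
          |∫ y, f (x - y) *
              ((4 * π * ν * t) ^ (-(D : ℝ) / 2) * Real.exp (-‖y‖ ^ 2 / (4 * ν * t)))|
            ≤ c' / (1 + ‖x‖ ^ (l - μ)) := by
  have hl0 : 0 ≤ l := (Nat.cast_nonneg D).trans hl.le
  obtain ⟨C, hC, hfC⟩ := exists_abs_le_mul_one_add_norm_rpow_neg hfc hl0 hdecay
  have hint : Integrable f :=
    ((integrable_one_add_norm (by rwa [finrank_euclideanSpace_fin])).const_mul C).mono'
      hfc.aestronglyMeasurable (ae_of_all _ hfC)
  have hbdd (z : EuclideanSpace ℝ (Fin D)) : |f z| ≤ C :=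
    (hfC z).trans (mul_le_of_le_one_right hC.le
      (rpow_le_one_of_one_le_of_nonpos (by simp) (neg_nonpos.2 hl0)))
  refine ⟨hint, memLp_two_of_integrable_of_abs_le hint hbdd, ?_⟩
  rintro μ ⟨hμ, -⟩
  refine ⟨C * exp (2 * l ^ 2) * 2 ^ ((D : ℝ) / 2) * 2, by positivity, ?_⟩
  rintro ν ⟨hν0, hν1⟩ t ⟨ht0, ht1⟩ x hx
  have hconv := abs_integral_comp_sub_mul_heatKernel_le hC.le hl0 hfC (mul_pos hν0 ht0)
    (mul_le_one₀ hν1 ht0.le ht1) x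
  simp only [heatKernel, finrank_euclideanSpace_fin] at hconv
  calc _ ≤ _ := hconv
    _ ≤ C * exp (2 * l ^ 2) * 2 ^ ((D : ℝ) / 2) * (2 / (1 + ‖x‖ ^ (l - μ))) := by
        gcongr; exact one_add_rpow_neg_le_two_div hx hl0 (by linarith)
    _ = _ := mul_div_assoc' _ _ _

/-- if f is continuous with |f(x)| ≤ c/(1+|x|^l) for |x| ≥ 1 and l > D,
then f ∈ L¹ ∩ L², and the heat-kernel convolution f ∗ G_ν(t,·) retains polynomial
decay of order l - μ for any μ ∈ (0,1), uniformly in ν, t ∈ (0,1]. -/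
theorem stmt16 (D : ℕ) (hD : 1 ≤ D) (l : ℝ) (hl : (D : ℝ) < l)
    (f : EuclideanSpace ℝ (Fin D) → ℝ) (hfc : Continuous f)
    (hdecay : ∃ c : ℝ, ∀ x, 1 ≤ ‖x‖ → |f x| ≤ c / (1 + ‖x‖ ^ l)) :
    Integrable f ∧ MemLp f 2 (volume) ∧
    ∀ μ ∈ Set.Ioo (0:ℝ) 1, ∃ c' > 0,
      ∀ ν ∈ Set.Ioc (0:ℝ) 1, ∀ t ∈ Set.Ioc (0:ℝ) 1,
        ∀ x : EuclideanSpace ℝ (Fin D), 1 ≤ ‖x‖ →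
          |∫ y, f (x - y) *
              ((4 * π * ν * t) ^ (-(D : ℝ) / 2) * Real.exp (-‖y‖ ^ 2 / (4 * ν * t)))|
            ≤ c' / (1 + ‖x‖ ^ (l - μ)) :=
  stmt16_general D l hl f hfc hdecay
end
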